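/- For z = x + yi in the open unit disc with a = |z - A₀|, b = |z - B₀|, c = |z - C₀|, the value φ(△(a,b,c)) := (-2a² + b² + c² + √3(b²-c²)i) / (a² + b² + c² + √3·√(-a⁴-b⁴-c⁴+2a²b²+2b²c²+2c²a²)) equals y + xi = i·z̄. -/

import Mathlib

open Complex

noncomputable def A0 : ℂ := Complex.I
noncomputable def B0 : ℂ := -Complex.exp ((Real.pi : ℂ) * Complex.I / 6)
noncomputable def C0 : ℂ := Complex.exp (-((Real.pi : ℂ) * Complex.I) / 6)

/-! Since the vertices lie on the unit circle, each squared distance is `1 + |z|² - 2⟪z, P⟫`.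
The weights `(-2, 1, 1)` and `√3 (1, -1)` of the numerator cancel `1 + |z|²` and pick out
`6y` and `6x`, while the Heron radicand (sixteen times the squared area) equals `3 (1 - |z|²)²`.
For `|z| < 1` its square root is `√3 (1 - |z|²)`, so the denominator is the constant `6`. -/

lemma B0_eq : B0 = (-(√3 / 2) : ℝ) + (-(1 / 2) : ℝ) * I := by
  rw [B0, show (Real.pi * I / 6 : ℂ) = ((Real.pi / 6 : ℝ) : ℂ) * I by push_cast; ring,
    exp_ofReal_mul_I, Real.cos_pi_div_six, Real.sin_pi_div_six]
  push_cast; ring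

lemma C0_eq : C0 = (√3 / 2 : ℝ) + (-(1 / 2) : ℝ) * I := by
  rw [C0, show (-(Real.pi * I) / 6 : ℂ) = ((-(Real.pi / 6) : ℝ) : ℂ) * I by push_cast; ring,
    exp_ofReal_mul_I, Real.cos_neg, Real.sin_neg, Real.cos_pi_div_six, Real.sin_pi_div_six]

lemma sq_norm_add_mul_I_sub (x y p q : ℝ) :
    ‖(x + y * I : ℂ) - (p + q * I)‖ ^ 2 = (x - p) ^ 2 + (y - q) ^ 2 := by
  rw [show (x + y * I : ℂ) - (p + q * I) = ((x - p : ℝ) : ℂ) + ((y - q : ℝ) : ℂ) * I by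
    push_cast; ring, Complex.sq_norm, normSq_add_mul_I]

lemma sq_norm_add_mul_I_sub_A0 (x y : ℝ) :
    ‖(x + y * I : ℂ) - A0‖ ^ 2 = x ^ 2 + (y - 1) ^ 2 := by
  simpa [A0] using sq_norm_add_mul_I_sub x y 0 1

lemma sq_norm_add_mul_I_sub_B0 (x y : ℝ) :
    ‖(x + y * I : ℂ) - B0‖ ^ 2 = (x + √3 / 2) ^ 2 + (y + 1 / 2) ^ 2 := by
  rw [B0_eq, sq_norm_add_mul_I_sub]; ring

lemma sq_norm_add_mul_I_sub_C0 (x y : ℝ) :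
    ‖(x + y * I : ℂ) - C0‖ ^ 2 = (x - √3 / 2) ^ 2 + (y + 1 / 2) ^ 2 := by
  rw [C0_eq, sq_norm_add_mul_I_sub]; ring

lemma heron_radicand_eq {x y a b c : ℝ} (ha : a ^ 2 = x ^ 2 + (y - 1) ^ 2)
    (hb : b ^ 2 = (x + √3 / 2) ^ 2 + (y + 1 / 2) ^ 2)
    (hc : c ^ 2 = (x - √3 / 2) ^ 2 + (y + 1 / 2) ^ 2) :
    -a ^ 4 - b ^ 4 - c ^ 4 + 2 * a ^ 2 * b ^ 2 + 2 * b ^ 2 * c ^ 2 + 2 * c ^ 2 * a ^ 2 =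
      3 * (1 - (x ^ 2 + y ^ 2)) ^ 2 := by
  have h3 : √3 ^ 2 = 3 := Real.sq_sqrt (by norm_num)
  have ha4 : a ^ 4 = (a ^ 2) ^ 2 := by ring
  have hb4 : b ^ 4 = (b ^ 2) ^ 2 := by ring
  have hc4 : c ^ 4 = (c ^ 2) ^ 2 := by ring
  rw [ha4, hb4, hc4, ha, hb, hc]
  linear_combination (1 - 3 * x ^ 2 - 2 * y + y ^ 2) * h3

lemma pompeiu_denominator_eq {x y a b c : ℝ} (hr : x ^ 2 + y ^ 2 ≤ 1)
    (ha : a ^ 2 = x ^ 2 + (y - 1) ^ 2)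
    (hb : b ^ 2 = (x + √3 / 2) ^ 2 + (y + 1 / 2) ^ 2)
    (hc : c ^ 2 = (x - √3 / 2) ^ 2 + (y + 1 / 2) ^ 2) :
    a ^ 2 + b ^ 2 + c ^ 2 + √3 * √(-a ^ 4 - b ^ 4 - c ^ 4 + 2 * a ^ 2 * b ^ 2 +
      2 * b ^ 2 * c ^ 2 + 2 * c ^ 2 * a ^ 2) = 6 := by
  have h3 : √3 ^ 2 = 3 := Real.sq_sqrt (by norm_num)
  rw [heron_radicand_eq ha hb hc, Real.sqrt_mul' _ (sq_nonneg _), Real.sqrt_sq (by linarith),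
    ha, hb, hc]
  linear_combination (3 / 2 - x ^ 2 - y ^ 2) * h3

/-- The key computation: the Pompeiu moduli map and the shape-function moduli map
differ by z ↦ i * conj z. -/
theorem stmt_13 (x y : ℝ) (a b c : ℝ)
    (hz : ‖(x : ℂ) + (y : ℂ) * Complex.I‖ < 1)
    (ha : a = ‖(x : ℂ) + (y : ℂ) * Complex.I - A0‖)
    (hb : b = ‖(x : ℂ) + (y : ℂ) * Complex.I - B0‖)
    (hc : c = ‖(x : ℂ) + (y : ℂ) * Complex.I - C0‖) :
    (((-2 * a ^ 2 + b ^ 2 + c ^ 2 : ℝ) : ℂ) +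
          ((Real.sqrt 3 * (b ^ 2 - c ^ 2) : ℝ) : ℂ) * Complex.I) /
        (((a ^ 2 + b ^ 2 + c ^ 2 + Real.sqrt 3 *
            Real.sqrt (-a ^ 4 - b ^ 4 - c ^ 4 + 2 * a ^ 2 * b ^ 2 + 2 * b ^ 2 * c ^ 2 +
              2 * c ^ 2 * a ^ 2) : ℝ) : ℂ)) = (y : ℂ) + (x : ℂ) * Complex.I ∧
    (y : ℂ) + (x : ℂ) * Complex.I =
      Complex.I * (starRingEnd ℂ) ((x : ℂ) + (y : ℂ) * Complex.I) := by
  have ha2 := ha ▸ sq_norm_add_mul_I_sub_A0 x y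
  have hb2 := hb ▸ sq_norm_add_mul_I_sub_B0 x y
  have hc2 := hc ▸ sq_norm_add_mul_I_sub_C0 x y
  have hr : x ^ 2 + y ^ 2 ≤ 1 := by
    simpa [Complex.sq_norm, normSq_add_mul_I] using pow_le_one₀ (norm_nonneg _) hz.le (n := 2)
  have h3 : √3 ^ 2 = 3 := Real.sq_sqrt (by norm_num)
  have hre : -2 * a ^ 2 + b ^ 2 + c ^ 2 = 6 * y := by
    rw [ha2, hb2, hc2]; linear_combination h3 / 2
  have him : √3 * (b ^ 2 - c ^ 2) = 6 * x := by
    rw [hb2, hc2]; linear_combination 2 * x * h3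
  refine ⟨?_, by simp [Complex.ext_iff]⟩
  rw [hre, him, pompeiu_denominator_eq hr ha2 hb2 hc2]
  push_cast
  ring
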